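/- arXiv:1205.6402 — 3 statements merged into one kernel-verified Lean document; each statement's English description precedes it below -/
import Mathlib

section
/- Substitution principle for CPL natural deduction: if Γ ⊢ A[w] and Γ, A[w] ⊢ C[w] in the CPL natural deduction system, then Γ ⊢ C[w]. -/
/-- Propositions of constructive provability logic over a type `Atom` of atomic
propositions: atoms `Q`, falsehood `⊥`, implication `A ⊃ B`, possibility `◇A`,
and necessity `□A`. -/
inductive Form (Atom : Type) : Type where
  | atom : Atom → Form Atom
  | bot  : Form Atom
  | imp  : Form Atom → Form Atom → Form Atom
  | dia  : Form Atom → Form Atom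
  | box  : Form Atom → Form Atom
  deriving DecidableEq

/-- `¬A` abbreviates `A ⊃ ⊥`. -/
def Form.neg {Atom : Type} (A : Form Atom) : Form Atom := Form.imp A Form.bot

/-- A context is a finite set of judgments `A[w]` pairing a proposition with a world. -/
abbrev Ctx (Atom W : Type) [DecidableEq Atom] [DecidableEq W] := Finset (Form Atom × W)

/-- CPL natural deduction with conclusions at a fixed world `w`, parameterized by
an oracle `O` giving provability at the worlds accessible from `w` (which, by
converse well-foundedness of the accessibility relation, is defined before
provability at `w`).  The rules are: hyp, ⊥E, ⊃I, ⊃E, ◇I, □I, ◇E, □E. -/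
inductive NDInner {Atom W : Type} [DecidableEq Atom] [DecidableEq W]
    (acc : W → W → Prop) (w : W)
    (O : ∀ w', acc w w' → Ctx Atom W → Form Atom → Prop) :
    Ctx Atom W → Form Atom → Prop where
  | hyp (Γ : Ctx Atom W) (A : Form Atom) :
      NDInner acc w O (insert (A, w) Γ) A
  | botE (Γ : Ctx Atom W) (C : Form Atom) :
      NDInner acc w O Γ .bot → NDInner acc w O Γ C
  | impI (Γ : Ctx Atom W) (A B : Form Atom) :
      NDInner acc w O (insert (A, w) Γ) B → NDInner acc w O Γ (.imp A B)
  | impE (Γ : Ctx Atom W) (A B : Form Atom) :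
      NDInner acc w O Γ (.imp A B) → NDInner acc w O Γ A → NDInner acc w O Γ B
  | diaI (Γ : Ctx Atom W) (A : Form Atom) (w' : W) (h : acc w w') :
      O w' h Γ A → NDInner acc w O Γ (.dia A)
  | boxI (Γ : Ctx Atom W) (A : Form Atom) :
      (∀ w' (h : acc w w'), O w' h Γ A) → NDInner acc w O Γ (.box A)
  | diaE (Γ : Ctx Atom W) (A C : Form Atom) :
      NDInner acc w O Γ (.dia A) →
      (∀ w' (h : acc w w'), O w' h Γ A → NDInner acc w O Γ C) →
      NDInner acc w O Γ C
  | boxE (Γ : Ctx Atom W) (A C : Form Atom) :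
      NDInner acc w O Γ (.box A) →
      ((∀ w' (h : acc w w'), O w' h Γ A) → NDInner acc w O Γ C) →
      NDInner acc w O Γ C

/-- The natural deduction judgment `Γ ⊢ A[w]` of tethered constructive
provability logic CPL, defined one world at a time by well-founded recursion
on the converse well-founded accessibility relation `acc` (`≺`). -/
def NDCPL {Atom W : Type} [DecidableEq Atom] [DecidableEq W]
    (acc : W → W → Prop) (hwf : WellFounded (Function.swap acc)) :
    W → Ctx Atom W → Form Atom → Prop :=
  hwf.fix (C := fun _ => Ctx Atom W → Form Atom → Prop)
    (fun w rec => NDInner acc w (fun w' h => rec w' h))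

lemma NDCPL_unfold {Atom W : Type} [DecidableEq Atom] [DecidableEq W]
    (acc : W → W → Prop) (hwf : WellFounded (Function.swap acc)) (w : W) :
    NDCPL (Atom := Atom) acc hwf w
      = NDInner acc w (fun w' _ => NDCPL acc hwf w') :=
  hwf.fix_eq _ w

lemma acc_acyclic {W : Type} (acc : W → W → Prop)
    (hwf : WellFounded (Function.swap acc)) (u : W) :
    ¬ Relation.TransGen acc u u := by
  intro h
  have : WellFounded (Relation.TransGen (Function.swap acc)) := hwf.transGen
  exact this.isIrrefl.irrefl _ (Relation.transGen_swap.mpr h)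

/-- Transfer lemma: hypotheses at the current world may be weakened, and
hypotheses at worlds not reachable from the current world are irrelevant. -/
lemma NDCPL_transfer {Atom W : Type} [DecidableEq Atom] [DecidableEq W]
    (acc : W → W → Prop) (hwf : WellFounded (Function.swap acc)) :
    ∀ (u : W) (Δ : Ctx Atom W) (C : Form Atom), NDCPL acc hwf u Δ C →
      ∀ Δ' : Ctx Atom W,
        (∀ B : Form Atom, (B, u) ∈ Δ → (B, u) ∈ Δ') →
        (∀ (B : Form Atom) (v : W), Relation.TransGen acc u v →
            ((B, v) ∈ Δ ↔ (B, v) ∈ Δ')) →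
        NDCPL acc hwf u Δ' C := by
  intro u
  induction u using WellFounded.induction hwf with
  | _ u IH =>
    have oracle : ∀ (Δ Δ' : Ctx Atom W),
        (∀ (B : Form Atom) (v : W), Relation.TransGen acc u v →
            ((B, v) ∈ Δ ↔ (B, v) ∈ Δ')) →
        ∀ (w' : W), acc u w' → ∀ (X : Form Atom),
          NDCPL acc hwf w' Δ X → NDCPL acc hwf w' Δ' X := by
      intro Δ Δ' h2 w' hw X hX
      refine IH w' hw Δ X hX Δ' ?_ ?_
      · exact fun B hB => (h2 B w' (Relation.TransGen.single hw)).mp hB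
      · exact fun B v hv =>
          h2 B v (Relation.TransGen.head hw hv)
    intro Δ C h
    rw [NDCPL_unfold] at h
    induction h with
    | hyp Γ A =>
      intro Δ' h1 h2
      have hm : (A, u) ∈ Δ' := h1 A (Finset.mem_insert_self _ _)
      rw [NDCPL_unfold, ← Finset.insert_eq_self.mpr hm]
      exact NDInner.hyp _ _
    | botE Γ C _ ih =>
      intro Δ' h1 h2
      rw [NDCPL_unfold]
      refine NDInner.botE _ _ ?_
      rw [← NDCPL_unfold]; exact ih Δ' h1 h2
    | impI Γ A B _ ih =>
      intro Δ' h1 h2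
      rw [NDCPL_unfold]
      refine NDInner.impI _ _ _ ?_
      rw [← NDCPL_unfold]
      refine ih (insert (A, u) Δ') ?_ ?_
      · intro B0 hB0
        rcases Finset.mem_insert.mp hB0 with h | h
        · exact h ▸ Finset.mem_insert_self _ _
        · exact Finset.mem_insert_of_mem (h1 B0 h)
      · intro B0 v hv
        have hvu : v ≠ u := by
          intro e; exact acc_acyclic acc hwf u (e ▸ hv)
        have hne : (B0, v) ≠ (A, u) := by
          intro e; exact hvu (congrArg Prod.snd e)
        simp only [Finset.mem_insert, hne, false_or]
        exact h2 B0 v hv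
    | impE Γ A B _ _ ih1 ih2 =>
      intro Δ' h1 h2
      rw [NDCPL_unfold]
      refine NDInner.impE _ A _ ?_ ?_ <;> rw [← NDCPL_unfold]
      · exact ih1 Δ' h1 h2
      · exact ih2 Δ' h1 h2
    | diaI Γ A w' hw hO =>
      intro Δ' h1 h2
      rw [NDCPL_unfold]
      exact NDInner.diaI _ _ w' hw (oracle _ Δ' h2 w' hw A hO)
    | boxI Γ A hO =>
      intro Δ' h1 h2
      rw [NDCPL_unfold]
      exact NDInner.boxI _ _ (fun w' hw => oracle _ Δ' h2 w' hw A (hO w' hw))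
    | diaE Γ A C _ _ ihd ihk =>
      intro Δ' h1 h2
      rw [NDCPL_unfold]
      refine NDInner.diaE _ A _ ?_ ?_
      · rw [← NDCPL_unfold]; exact ihd Δ' h1 h2
      · intro w' hw hA
        rw [← NDCPL_unfold]
        have hA' : NDCPL acc hwf w' Γ A :=
          oracle Δ' Γ (fun B v hv => (h2 B v hv).symm) w' hw A hA
        exact ihk w' hw hA' Δ' h1 h2
    | boxE Γ A C _ _ ihd ihk =>
      intro Δ' h1 h2
      rw [NDCPL_unfold]
      refine NDInner.boxE _ A _ ?_ ?_
      · rw [← NDCPL_unfold]; exact ihd Δ' h1 h2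
      · intro hA
        rw [← NDCPL_unfold]
        have hA' : ∀ w' (hw : acc u w'), NDCPL acc hwf w' Γ A := fun w' hw =>
          oracle Δ' Γ (fun B v hv => (h2 B v hv).symm) w' hw A (hA w' hw)
        exact ihk hA' Δ' h1 h2


/-- Substitution principle for CPL natural deduction: if `Γ ⊢ A[w]` and
`Γ, A[w] ⊢ C[w]`, then `Γ ⊢ C[w]`. -/
theorem cpl_nd_substitution {Atom W : Type} [DecidableEq Atom] [DecidableEq W]
    (acc : W → W → Prop) (hwf : WellFounded (Function.swap acc))
    (w : W) (Γ : Ctx Atom W) (A C : Form Atom)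
    (h1 : NDCPL acc hwf w Γ A) (h2 : NDCPL acc hwf w (insert (A, w) Γ) C) :
    NDCPL acc hwf w Γ C := by
  -- helper facts
  have hnwv : ∀ w', acc w w' → ∀ v, Relation.TransGen acc w' v → v ≠ w := by
    intro w' hw v hv e
    exact acc_acyclic acc hwf w (Relation.TransGen.head hw (e ▸ hv))
  have hnw : ∀ w', acc w w' → w' ≠ w := by
    intro w' hw e
    exact acc_acyclic acc hwf w (Relation.TransGen.single (e ▸ hw))
  -- drop the hypothesis (A,w) at an accessible world
  have drop : ∀ (Γ' : Ctx Atom W) (w' : W), acc w w' → ∀ X : Form Atom,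
      NDCPL acc hwf w' (insert (A, w) Γ') X → NDCPL acc hwf w' Γ' X := by
    intro Γ' w' hw X hX
    refine NDCPL_transfer acc hwf w' _ X hX Γ' ?_ ?_
    · intro B hB
      rcases Finset.mem_insert.mp hB with h | h
      · exact absurd (congrArg Prod.snd h) (hnw w' hw)
      · exact h
    · intro B v hv
      have : (B, v) ≠ (A, w) := fun e => hnwv w' hw v hv (congrArg Prod.snd e)
      simp [Finset.mem_insert, this]
  have add : ∀ (Γ' : Ctx Atom W) (w' : W), acc w w' → ∀ X : Form Atom,
      NDCPL acc hwf w' Γ' X → NDCPL acc hwf w' (insert (A, w) Γ') X := by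
    intro Γ' w' hw X hX
    refine NDCPL_transfer acc hwf w' _ X hX _ ?_ ?_
    · exact fun B hB => Finset.mem_insert_of_mem hB
    · intro B v hv
      have : (B, v) ≠ (A, w) := fun e => hnwv w' hw v hv (congrArg Prod.snd e)
      simp [Finset.mem_insert, this]
  suffices H : ∀ (Δ : Ctx Atom W) (C : Form Atom),
      NDInner acc w (fun w' _ => NDCPL acc hwf w') Δ C →
      ∀ Γ' : Ctx Atom W, Δ = insert (A, w) Γ' →
        NDCPL acc hwf w Γ' A → NDCPL acc hwf w Γ' C by
    rw [NDCPL_unfold] at h2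
    exact H _ _ h2 Γ rfl h1
  intro Δ C hd
  induction hd with
  | hyp Γ0 B =>
    intro Γ' heq hA
    have hm : (B, w) ∈ insert (A, w) Γ' := heq ▸ Finset.mem_insert_self _ _
    rcases Finset.mem_insert.mp hm with h | h
    · obtain rfl : B = A := congrArg Prod.fst h
      exact hA
    · rw [NDCPL_unfold, ← Finset.insert_eq_self.mpr h]
      exact NDInner.hyp _ _
  | botE Γ0 C _ ih =>
    intro Γ' heq hA
    rw [NDCPL_unfold]
    refine NDInner.botE _ _ ?_
    rw [← NDCPL_unfold]; exact ih Γ' heq hA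
  | impI Γ0 A0 B _ ih =>
    intro Γ' heq hA
    rw [NDCPL_unfold]
    refine NDInner.impI _ _ _ ?_
    rw [← NDCPL_unfold]
    refine ih (insert (A0, w) Γ') ?_ ?_
    · rw [heq, Finset.insert_comm]
    · refine NDCPL_transfer acc hwf w _ A hA _ ?_ ?_
      · exact fun B0 hB0 => Finset.mem_insert_of_mem hB0
      · intro B0 v hv
        have hvw : v ≠ w := fun e => acc_acyclic acc hwf w (e ▸ hv)
        have : (B0, v) ≠ (A0, w) := fun e => hvw (congrArg Prod.snd e)
        simp [Finset.mem_insert, this]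
  | impE Γ0 A0 B _ _ ih1 ih2 =>
    intro Γ' heq hA
    rw [NDCPL_unfold]
    refine NDInner.impE _ A0 _ ?_ ?_ <;> rw [← NDCPL_unfold]
    · exact ih1 Γ' heq hA
    · exact ih2 Γ' heq hA
  | diaI Γ0 A0 w' hw hO =>
    intro Γ' heq hA
    rw [NDCPL_unfold]
    exact NDInner.diaI _ _ w' hw (drop Γ' w' hw A0 (heq ▸ hO))
  | boxI Γ0 A0 hO =>
    intro Γ' heq hA
    rw [NDCPL_unfold]
    exact NDInner.boxI _ _ (fun w' hw => drop Γ' w' hw A0 (heq ▸ hO w' hw))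
  | diaE Γ0 A0 C _ _ ihd ihk =>
    intro Γ' heq hA
    rw [NDCPL_unfold]
    refine NDInner.diaE _ A0 _ ?_ ?_
    · rw [← NDCPL_unfold]; exact ihd Γ' heq hA
    · intro w' hw hA0
      rw [← NDCPL_unfold]
      exact ihk w' hw (heq ▸ add Γ' w' hw A0 hA0) Γ' heq hA
  | boxE Γ0 A0 C _ _ ihd ihk =>
    intro Γ' heq hA
    rw [NDCPL_unfold]
    refine NDInner.boxE _ A0 _ ?_ ?_
    · rw [← NDCPL_unfold]; exact ihd Γ' heq hA
    · intro hA0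
      rw [← NDCPL_unfold]
      exact ihk (fun w' hw => heq ▸ add Γ' w' hw A0 (hA0 w' hw)) Γ' heq hA
end

section
/- Generalized weakening for CPL* natural deduction: if Γ ⊆_w Γ' and Γ ⊢ A[w] in the CPL* natural deduction system, then Γ' ⊢ A[w]. -/
/-- CPL* natural deduction with conclusions at a fixed world `u`, parameterized by
an oracle `O` giving provability at the worlds transitively accessible from `u`
(which, by converse well-foundedness of the accessibility relation, is defined
before provability at `u`).  The rules are: hyp, ⊥E, ⊃I, ⊃E, ◇I, □I, ◇E, □E.

A de-tethered premise "`Γ ⊢ X[w]` where `u ≺* w`" is rendered as the pair of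
hypotheses `here : u = w → ⋯ recursive occurrence at u ⋯` and
`above : ∀ h : u ≺⁺ w, O w h ⋯`; since the accessibility relation is converse
well-founded, `u = w` and `u ≺⁺ w` are mutually exclusive and together cover
`u ≺* w`, so exactly one of the two hypotheses is non-vacuous, and it expresses
precisely `Γ ⊢ X[w]`. -/
inductive NDSInner {Atom W : Type} [DecidableEq Atom] [DecidableEq W]
    (acc : W → W → Prop) (u : W)
    (O : ∀ w, Relation.TransGen acc u w → Ctx Atom W → Form Atom → Prop) :
    Ctx Atom W → Form Atom → Prop where
  | hyp (Γ : Ctx Atom W) (A : Form Atom) :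
      NDSInner acc u O (insert (A, u) Γ) A
  | botE (Γ : Ctx Atom W) (C : Form Atom) (w : W)
      (hw : Relation.ReflTransGen acc u w)
      (here : u = w → NDSInner acc u O Γ .bot)
      (above : ∀ h : Relation.TransGen acc u w, O w h Γ .bot) :
      NDSInner acc u O Γ C
  | impI (Γ : Ctx Atom W) (A B : Form Atom) :
      NDSInner acc u O (insert (A, u) Γ) B → NDSInner acc u O Γ (.imp A B)
  | impE (Γ : Ctx Atom W) (A B : Form Atom) :
      NDSInner acc u O Γ (.imp A B) → NDSInner acc u O Γ A → NDSInner acc u O Γ B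
  | diaI (Γ : Ctx Atom W) (A : Form Atom) (w' : W) (h : acc u w') :
      O w' (Relation.TransGen.single h) Γ A → NDSInner acc u O Γ (.dia A)
  | boxI (Γ : Ctx Atom W) (A : Form Atom) :
      (∀ w' (h : acc u w'), O w' (Relation.TransGen.single h) Γ A) →
      NDSInner acc u O Γ (.box A)
  | diaE (Γ : Ctx Atom W) (A C : Form Atom) (w : W)
      (hw : Relation.ReflTransGen acc u w)
      (here : u = w → NDSInner acc u O Γ (.dia A))
      (above : ∀ h : Relation.TransGen acc u w, O w h Γ (.dia A))
      (k : ∀ w' (h : acc w w'), O w' (Relation.TransGen.tail' hw h) Γ A →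
            NDSInner acc u O Γ C) :
      NDSInner acc u O Γ C
  | boxE (Γ : Ctx Atom W) (A C : Form Atom) (w : W)
      (hw : Relation.ReflTransGen acc u w)
      (here : u = w → NDSInner acc u O Γ (.box A))
      (above : ∀ h : Relation.TransGen acc u w, O w h Γ (.box A))
      (k : (∀ w' (h : acc w w'), O w' (Relation.TransGen.tail' hw h) Γ A) →
            NDSInner acc u O Γ C) :
      NDSInner acc u O Γ C

/-- The natural deduction judgment `Γ ⊢ A[w]` of de-tethered constructive
provability logic CPL*, defined one world at a time by well-founded recursion
on the converse well-founded accessibility relation `acc` (`≺`). -/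
def NDCPLStar {Atom W : Type} [DecidableEq Atom] [DecidableEq W]
    (acc : W → W → Prop) (hwf : WellFounded (Function.swap acc)) :
    W → Ctx Atom W → Form Atom → Prop :=
  have hwf' : WellFounded (fun a b : W => Relation.TransGen acc b a) :=
    Subrelation.wf (fun {a b} h => (Relation.transGen_swap.mpr h :
      Relation.TransGen (Function.swap acc) a b)) hwf.transGen
  hwf'.fix (C := fun _ => Ctx Atom W → Form Atom → Prop)
    (fun u rec => NDSInner acc u (fun w h => rec w h))

/-- `Γ ⊆_w Γ'`: judgments at worlds reflexively-transitively accessible from `w`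
may only be added, and judgments at worlds transitively accessible from `w`
may not change (judgments at other worlds are unconstrained). -/
def SubCtx {Atom W : Type} [DecidableEq Atom] [DecidableEq W]
    (acc : W → W → Prop) (w : W) (Γ Γ' : Ctx Atom W) : Prop :=
  (∀ (A : Form Atom) (w' : W), Relation.ReflTransGen acc w w' →
      (A, w') ∈ Γ → (A, w') ∈ Γ') ∧
  (∀ (A : Form Atom) (w' : W), Relation.TransGen acc w w' →
      (A, w') ∈ Γ' → (A, w') ∈ Γ)

section Aux

variable {Atom W : Type} [DecidableEq Atom] [DecidableEq W] {acc : W → W → Prop}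

private theorem wf_irrefl {α} {r : α → α → Prop} (h : WellFounded r) (a : α) : ¬ r a a :=
  h.induction (C := fun a => ¬ r a a) a (fun x ih hx => ih x hx hx)

private theorem NDCPLStar_eq (hwf : WellFounded (Function.swap acc)) (u : W) :
    NDCPLStar (Atom := Atom) acc hwf u =
      NDSInner acc u (fun w _ => NDCPLStar acc hwf w) := by
  unfold NDCPLStar
  exact WellFounded.fix_eq _ _ u

private theorem subctx_insert {u : W} {Γ Γ' : Ctx Atom W}
    (hwf : WellFounded (Function.swap acc))
    (hsub : SubCtx acc u Γ Γ') (A : Form Atom) :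
    SubCtx acc u (insert (A, u) Γ) (insert (A, u) Γ') := by
  constructor
  · intro B w' hw hB
    rcases Finset.mem_insert.1 hB with h | h
    · exact Finset.mem_insert.2 (Or.inl h)
    · exact Finset.mem_insert.2 (Or.inr (hsub.1 B w' hw h))
  · intro B w' hw hB
    rcases Finset.mem_insert.1 hB with h | h
    · exfalso
      injection h with h1 h2
      exact wf_irrefl hwf.transGen u (Relation.transGen_swap.mp (h2 ▸ hw))
    · exact Finset.mem_insert.2 (Or.inr (hsub.2 B w' hw h))

private theorem subctx_above {u w : W} {Γ Γ' : Ctx Atom W}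
    (hsub : SubCtx acc u Γ Γ') (huw : Relation.TransGen acc u w) :
    SubCtx acc w Γ Γ' ∧ SubCtx acc w Γ' Γ := by
  have key : ∀ (A : Form Atom) (w' : W), Relation.ReflTransGen acc w w' →
      ((A, w') ∈ Γ ↔ (A, w') ∈ Γ') := by
    intro A w' hw
    have h' : Relation.TransGen acc u w' := Relation.TransGen.trans_left huw hw
    exact ⟨hsub.1 A w' h'.to_reflTransGen, hsub.2 A w' h'⟩
  refine ⟨⟨fun A w' hw => (key A w' hw).1, fun A w' hw => (key A w' hw.to_reflTransGen).2⟩,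
    ⟨fun A w' hw => (key A w' hw).2, fun A w' hw => (key A w' hw.to_reflTransGen).1⟩⟩

end Aux

/-- Generalized weakening for CPL* natural deduction: if `Γ ⊆_w Γ'` and
`Γ ⊢ A[w]`, then `Γ' ⊢ A[w]`. -/
theorem cplstar_nd_weakening {Atom W : Type} [DecidableEq Atom] [DecidableEq W]
    (acc : W → W → Prop) (hwf : WellFounded (Function.swap acc))
    (w : W) (Γ Γ' : Ctx Atom W) (A : Form Atom)
    (hsub : SubCtx acc w Γ Γ') (h : NDCPLStar acc hwf w Γ A) :
    NDCPLStar acc hwf w Γ' A := by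
  have hwf' : WellFounded (fun a b : W => Relation.TransGen acc b a) :=
    Subrelation.wf (fun {a b} h => (Relation.transGen_swap.mpr h :
      Relation.TransGen (Function.swap acc) a b)) hwf.transGen
  induction w using hwf'.induction generalizing Γ Γ' A with
  | _ u ih =>
  rw [NDCPLStar_eq] at h ⊢
  revert hsub
  induction h generalizing Γ' with
  | hyp Γ₀ B =>
    intro hsub
    have hmem : (B, u) ∈ Γ' :=
      hsub.1 B u Relation.ReflTransGen.refl (Finset.mem_insert_self _ _)
    rw [← Finset.insert_eq_self.mpr hmem]
    exact .hyp Γ' B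
  | botE Γ₀ C w hw here above here_ih =>
    intro hsub
    exact .botE Γ' C w hw (fun he => here_ih he Γ' hsub)
      (fun ht => ih w ht Γ₀ Γ' _ (subctx_above hsub ht).1 (above ht))
  | impI Γ₀ B C hB ihB =>
    intro hsub
    exact .impI Γ' B C (ihB _ (subctx_insert hwf hsub B))
  | impE Γ₀ B C h1 h2 ih1 ih2 =>
    intro hsub
    exact .impE Γ' B C (ih1 Γ' hsub) (ih2 Γ' hsub)
  | diaI Γ₀ B w' hacc hO =>
    intro hsub
    exact .diaI Γ' B w' hacc
      (ih w' (Relation.TransGen.single hacc) Γ₀ Γ' _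
        (subctx_above hsub (Relation.TransGen.single hacc)).1 hO)
  | boxI Γ₀ B hO =>
    intro hsub
    exact .boxI Γ' B (fun w' hacc =>
      ih w' (Relation.TransGen.single hacc) Γ₀ Γ' _
        (subctx_above hsub (Relation.TransGen.single hacc)).1 (hO w' hacc))
  | diaE Γ₀ B C w hw here above k here_ih k_ih =>
    intro hsub
    refine .diaE Γ' B C w hw (fun he => here_ih he Γ' hsub)
      (fun ht => ih w ht Γ₀ Γ' _ (subctx_above hsub ht).1 (above ht))
      (fun w' hacc hO => ?_)
    have ht := Relation.TransGen.tail' hw hacc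
    exact k_ih w' hacc (ih w' ht Γ' Γ₀ _ (subctx_above hsub ht).2 hO) Γ' hsub
  | boxE Γ₀ B C w hw here above k here_ih k_ih =>
    intro hsub
    refine .boxE Γ' B C w hw (fun he => here_ih he Γ' hsub)
      (fun ht => ih w ht Γ₀ Γ' _ (subctx_above hsub ht).1 (above ht))
      (fun hO => ?_)
    refine k_ih (fun w' hacc => ?_) Γ' hsub
    have ht := Relation.TransGen.tail' hw hacc
    exact ih w' ht Γ' Γ₀ _ (subctx_above hsub ht).2 (hO w' hacc)
end

section
/- In the three-world example, the sequent ◇Q[α] ⟹ Q[β] is NOT derivable in the CPL sequent calculus (and likewise ◇Q[α] ⟹ Q[γ] is not derivable). -/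
inductive SeqInner {Atom W : Type} [DecidableEq Atom] [DecidableEq W]
    (acc : W → W → Prop) (w : W)
    (O : ∀ w', acc w w' → Ctx Atom W → Form Atom → Prop) :
    Ctx Atom W → Form Atom → Prop where
  | init (Γ : Ctx Atom W) (Q : Atom) :
      SeqInner acc w O (insert (.atom Q, w) Γ) (.atom Q)
  | botL (Γ : Ctx Atom W) (C : Form Atom) :
      (Form.bot, w) ∈ Γ → SeqInner acc w O Γ C
  | impR (Γ : Ctx Atom W) (A B : Form Atom) :
      SeqInner acc w O (insert (A, w) Γ) B → SeqInner acc w O Γ (.imp A B)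
  | impL (Γ : Ctx Atom W) (A B C : Form Atom) :
      (Form.imp A B, w) ∈ Γ → SeqInner acc w O Γ A →
      SeqInner acc w O (insert (B, w) Γ) C → SeqInner acc w O Γ C
  | diaR (Γ : Ctx Atom W) (A : Form Atom) (w' : W) (h : acc w w') :
      O w' h Γ A → SeqInner acc w O Γ (.dia A)
  | boxR (Γ : Ctx Atom W) (A : Form Atom) :
      (∀ w' (h : acc w w'), O w' h Γ A) → SeqInner acc w O Γ (.box A)
  | diaL (Γ : Ctx Atom W) (A C : Form Atom) :
      (Form.dia A, w) ∈ Γ →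
      (∀ w' (h : acc w w'), O w' h Γ A → SeqInner acc w O Γ C) →
      SeqInner acc w O Γ C
  | boxL (Γ : Ctx Atom W) (A C : Form Atom) :
      (Form.box A, w) ∈ Γ →
      ((∀ w' (h : acc w w'), O w' h Γ A) → SeqInner acc w O Γ C) →
      SeqInner acc w O Γ C

def SeqCPL {Atom W : Type} [DecidableEq Atom] [DecidableEq W]
    (acc : W → W → Prop) (hwf : WellFounded (Function.swap acc)) :
    W → Ctx Atom W → Form Atom → Prop :=
  hwf.fix (C := fun _ => Ctx Atom W → Form Atom → Prop)
    (fun w rec => SeqInner acc w (fun w' h => rec w' h))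

inductive W3 : Type where
  | α | β | γ
  deriving DecidableEq

def acc3 : W3 → W3 → Prop := fun a b =>
  (a = W3.α ∧ b = W3.β) ∨ (a = W3.α ∧ b = W3.γ) ∨ (a = W3.β ∧ b = W3.γ)

theorem acc3_wf : WellFounded (Function.swap acc3) := by
  have h : Subrelation (Function.swap acc3)
      (InvImage Nat.lt (fun x => match x with | .α => 2 | .β => 1 | .γ => 0)) := by
    intro a b hab
    rcases hab with ⟨h1, h2⟩ | ⟨h1, h2⟩ | ⟨h1, h2⟩ <;> subst h1 <;> subst h2 <;>
      simp [InvImage]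
  exact Subrelation.wf h (InvImage.wf _ Nat.lt_wfRel.wf)

lemma no_inner {Atom W : Type} [DecidableEq Atom] [DecidableEq W]
    (acc : W → W → Prop) (w wa : W) (hne : w ≠ wa) (Q : Atom)
    (O : ∀ w', acc w w' → Ctx Atom W → Form Atom → Prop) :
    ¬ SeqInner acc w O ({(Form.dia (Form.atom Q), wa)} : Ctx Atom W)
      (Form.atom Q) := by
  intro h
  generalize hΓ : ({(Form.dia (Form.atom Q), wa)} : Ctx Atom W) = Γ at h
  generalize hC : Form.atom Q = C at h
  cases h with
  | init Γ' Q' =>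
      have : (Form.atom Q', w) ∈ ({(Form.dia (Form.atom Q), wa)} : Ctx Atom W) := by
        rw [hΓ]; exact Finset.mem_insert_self _ _
      simp at this
  | botL Γ' C' hmem =>
      rw [← hΓ] at hmem; simp at hmem
  | impR Γ' A B _ => exact nomatch hC
  | diaR Γ' A w' hw _ => exact nomatch hC
  | boxR Γ' A _ => exact nomatch hC
  | impL Γ' A B C' hmem _ _ =>
      rw [← hΓ] at hmem; simp at hmem
  | diaL Γ' A C' hmem _ =>
      rw [← hΓ] at hmem; simp at hmem; exact hne hmem.2
  | boxL Γ' A C' hmem _ =>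
      rw [← hΓ] at hmem; simp at hmem

lemma seq_eq {Atom W : Type} [DecidableEq Atom] [DecidableEq W]
    (acc : W → W → Prop) (hwf : WellFounded (Function.swap acc)) (w : W) :
    SeqCPL (Atom := Atom) acc hwf w
      = SeqInner acc w (fun w' _ => SeqCPL acc hwf w') := by
  exact hwf.fix_eq _ w

/-- In the three-world example, the sequent `◇Q[α] ⟹ Q[β]` is NOT derivable in
the CPL sequent calculus, and likewise `◇Q[α] ⟹ Q[γ]` is not derivable. -/
theorem cpl_seq_dia_not_derivable {Atom : Type} [DecidableEq Atom] (Q : Atom) :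
    ¬ SeqCPL acc3 acc3_wf W3.β ({(Form.dia (Form.atom Q), W3.α)} : Ctx Atom W3)
        (Form.atom Q) ∧
    ¬ SeqCPL acc3 acc3_wf W3.γ ({(Form.dia (Form.atom Q), W3.α)} : Ctx Atom W3)
        (Form.atom Q) := by
  constructor
  · rw [seq_eq]; exact no_inner _ _ _ (by simp) Q _
  · rw [seq_eq]; exact no_inner _ _ _ (by simp) Q _
end
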